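/- The strings x and y are disjoint if and only if the radius of the radius lower-bound graph G_{x,y} is at least 4. -/
import Mathlib


/-- Vertices of the radius lower-bound graph `G_{x,y}`: the bit-gadget vertices
`a i`, `b i`, `fA h`, `tA h`, `fB h`, `tB h`, together with the seven extra nodes
`cA`, `cA'` (= c̄_A), `cB`, `cB'` (= c̄_B), `w0`, `w1`, `w2`. -/
inductive RVertex (k logk : ℕ) where
  | a (i : Fin k)
  | b (i : Fin k)
  | fA (h : Fin logk)
  | tA (h : Fin logk)
  | fB (h : Fin logk)
  | tB (h : Fin logk)
  | cA
  | cA'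
  | cB
  | cB'
  | w0
  | w1
  | w2
deriving DecidableEq

/-- Base relation generating the edges of the radius lower-bound graph `G_{x,y}`. -/
def rRel (k logk : ℕ) (x y : Fin k → Bool) : RVertex k logk → RVertex k logk → Prop
  | .a i, .fA h => i.val.testBit h.val = false
  | .a i, .tA h => i.val.testBit h.val = true
  | .b i, .fB h => i.val.testBit h.val = false
  | .b i, .tB h => i.val.testBit h.val = true
  | .fA h, .tB h' => h = h'
  | .tA h, .fB h' => h = h'
  | .fA h, .tA h' => h = h'
  | .a _, .cA => True
  | .b _, .cB => True
  | .fA _, .cA' => True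
  | .tA _, .cA' => True
  | .fB _, .cB' => True
  | .tB _, .cB' => True
  | .cA, .cA' => True
  | .cB, .cB' => True
  | .cA', .cB' => True
  | .w0, .w1 => True
  | .w1, .w2 => True
  | .w0, .a _ => True
  | .a i, .cA' => x i = true
  | .b i, .cB' => y i = true
  | _, _ => False

/-- The radius lower-bound graph `G_{x,y}`. -/
def rGraph (k logk : ℕ) (x y : Fin k → Bool) : SimpleGraph (RVertex k logk) :=
  SimpleGraph.fromRel (rRel k logk x y)

/-- The eccentricity of a node: the supremum of its hop distances to all nodes. -/
noncomputable def eccent {V : Type*} (G : SimpleGraph V) (u : V) : ℕ∞ :=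
  ⨆ v, G.edist u v

/-- The radius of a graph: the minimum eccentricity of a node. -/
noncomputable def radius {V : Type*} (G : SimpleGraph V) : ℕ∞ :=
  ⨅ u, eccent G u


-- auxiliary lemmas

lemma walk_bound {V : Type*} {G : SimpleGraph V} (f : V → ℕ)
    (hL : ∀ u v, G.Adj u v → f u ≤ f v + 1) :
    ∀ {u v : V} (w : G.Walk u v), f u ≤ f v + w.length := by
  intro u v w
  induction w with
  | nil => simp
  | cons ha w ih =>
    have h1 := hL _ _ ha
    simp only [SimpleGraph.Walk.length_cons]
    omega

lemma edist_ge_of_potential {V : Type*} {G : SimpleGraph V} (f : V → ℕ)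
    (hL : ∀ u v, G.Adj u v → f u ≤ f v + 1)
    {u v : V} (hu : 4 ≤ f u) (hv : f v = 0) : 4 ≤ G.edist u v := by
  by_contra hc
  push_neg at hc
  obtain ⟨w, hw⟩ := SimpleGraph.exists_walk_of_edist_ne_top hc.ne_top
  have hlen : w.length < 4 := by
    have h4 : (w.length : ℕ∞) < 4 := hw ▸ hc
    exact_mod_cast h4
  have := walk_bound f hL w
  omega

lemma rAdj {k logk : ℕ} {x y : Fin k → Bool} {u v : RVertex k logk}
    (hne : u ≠ v) (h : rRel k logk x y u v ∨ rRel k logk x y v u) :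
    (rGraph k logk x y).Adj u v := by
  rw [rGraph, SimpleGraph.fromRel_adj]
  exact ⟨hne, h⟩

lemma lip_of_rel {k logk : ℕ} {x y : Fin k → Bool} (f : RVertex k logk → ℕ)
    (H : ∀ u v, rRel k logk x y u v → f u ≤ f v + 1 ∧ f v ≤ f u + 1) :
    ∀ u v, (rGraph k logk x y).Adj u v → f u ≤ f v + 1 := by
  intro u v hadj
  rw [rGraph, SimpleGraph.fromRel_adj] at hadj
  rcases hadj.2 with h | h
  · exact (H _ _ h).1
  · exact (H _ _ h).2

def fW {k logk : ℕ} : RVertex k logk → ℕ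
  | .w2 => 0 | .w1 => 1 | .w0 => 2 | .a _ => 3 | _ => 4

def gB {k logk : ℕ} : RVertex k logk → ℕ
  | .b _ => 0 | .fB _ => 1 | .tB _ => 1 | .cB => 1 | .cB' => 1
  | .fA _ => 2 | .tA _ => 2 | .cA' => 2 | .cA => 3 | .a _ => 3
  | .w0 => 4 | .w1 => 5 | .w2 => 6

def hAB {k logk : ℕ} (i : Fin k) (xi : Bool) : RVertex k logk → ℕ
  | .a j => if j = i then 4 else 3
  | .b j => if j = i then 0 else 2
  | .fA h => if i.val.testBit h.val then 2 else 3
  | .tA h => if i.val.testBit h.val then 3 else 2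
  | .fB h => if i.val.testBit h.val then 2 else 1
  | .tB h => if i.val.testBit h.val then 1 else 2
  | .cA => 3
  | .cA' => if xi then 3 else 2
  | .cB => 1
  | .cB' => if xi then 2 else 1
  | _ => 3

lemma fW_lip {k logk : ℕ} {x y : Fin k → Bool} :
    ∀ u v : RVertex k logk, rRel k logk x y u v → fW u ≤ fW v + 1 ∧ fW v ≤ fW u + 1 := by
  intro u v h
  cases u <;> cases v <;> simp_all [rRel, fW]

lemma gB_lip {k logk : ℕ} {x y : Fin k → Bool} :
    ∀ u v : RVertex k logk, rRel k logk x y u v → gB u ≤ gB v + 1 ∧ gB v ≤ gB u + 1 := by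
  intro u v h
  cases u <;> cases v <;> simp_all [rRel, gB]

lemma hAB_lip {k logk : ℕ} {x y : Fin k → Bool} (i : Fin k)
    (hdisj : ¬(x i = true ∧ y i = true)) :
    ∀ u v : RVertex k logk, rRel k logk x y u v →
      hAB i (x i) u ≤ hAB i (x i) v + 1 ∧ hAB i (x i) v ≤ hAB i (x i) u + 1 := by
  intro u v h
  cases u <;> cases v <;>
    simp only [rRel, hAB] at h ⊢ <;>
    first
      | exact h.elim
      | (split_ifs <;> simp_all <;> omega)
      | simp_all
      | omega

lemma edist_le_one {V : Type*} {G : SimpleGraph V} {u v : V} (h : G.Adj u v) :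
    G.edist u v ≤ 1 :=
  le_of_eq (SimpleGraph.edist_eq_one_iff_adj.mpr h)

lemma chain2 {V : Type*} {G : SimpleGraph V} {u p v : V}
    (h1 : G.Adj u p) (h2 : G.Adj p v) : G.edist u v ≤ 2 :=
  calc G.edist u v ≤ G.edist u p + G.edist p v := SimpleGraph.edist_triangle
    _ ≤ 1 + 1 := add_le_add (edist_le_one h1) (edist_le_one h2)
    _ = 2 := by norm_num

lemma chain3 {V : Type*} {G : SimpleGraph V} {u p q v : V}
    (h1 : G.Adj u p) (h2 : G.Adj p q) (h3 : G.Adj q v) : G.edist u v ≤ 3 :=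
  calc G.edist u v ≤ G.edist u p + G.edist p v := SimpleGraph.edist_triangle
    _ ≤ 1 + 2 := add_le_add (edist_le_one h1) (chain2 h2 h3)
    _ = 3 := by norm_num

lemma exists_diff_bit {k logk : ℕ} (hpow : k = 2 ^ logk) {i j : Fin k} (hne : i ≠ j) :
    ∃ h : Fin logk, i.val.testBit h.val ≠ j.val.testBit h.val := by
  by_contra hc
  push_neg at hc
  apply hne
  apply Fin.ext
  apply Nat.eq_of_testBit_eq
  intro m
  by_cases hm : m < logk
  · exact hc ⟨m, hm⟩
  · have hi : i.val < 2 ^ m :=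
      lt_of_lt_of_le (hpow ▸ i.isLt) (Nat.pow_le_pow_right (by norm_num) (le_of_not_gt hm))
    have hj : j.val < 2 ^ m :=
      lt_of_lt_of_le (hpow ▸ j.isLt) (Nat.pow_le_pow_right (by norm_num) (le_of_not_gt hm))
    rw [Nat.testBit_eq_false_of_lt hi, Nat.testBit_eq_false_of_lt hj]


/-- the strings `x` and `y` are disjoint (there is no index `i` with
`x i = y i = 1`) if and only if the radius of the radius lower-bound graph
`G_{x,y}` is at least `4`. -/
theorem rGraph_radius_ge_four_iff (k logk : ℕ) (hk : 2 ≤ k) (hpow : k = 2 ^ logk)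
    (x y : Fin k → Bool) :
    (¬ ∃ i : Fin k, x i = true ∧ y i = true) ↔ 4 ≤ radius (rGraph k logk x y) := by
  constructor
  · intro hdisj
    rw [radius]
    refine le_iInf fun u => ?_
    rw [eccent]
    cases u with
    | a i =>
      refine le_trans ?_ (le_iSup _ (RVertex.b i))
      refine edist_ge_of_potential (hAB i (x i))
        (lip_of_rel _ (hAB_lip i (fun hc => hdisj ⟨i, hc⟩))) ?_ ?_
      · simp [hAB]
      · simp [hAB]
    | b j =>
      refine le_trans ?_ (le_iSup _ RVertex.w2)
      exact edist_ge_of_potential fW (lip_of_rel _ fW_lip) (by simp [fW]) (by simp [fW])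
    | fA h =>
      refine le_trans ?_ (le_iSup _ RVertex.w2)
      exact edist_ge_of_potential fW (lip_of_rel _ fW_lip) (by simp [fW]) (by simp [fW])
    | tA h =>
      refine le_trans ?_ (le_iSup _ RVertex.w2)
      exact edist_ge_of_potential fW (lip_of_rel _ fW_lip) (by simp [fW]) (by simp [fW])
    | fB h =>
      refine le_trans ?_ (le_iSup _ RVertex.w2)
      exact edist_ge_of_potential fW (lip_of_rel _ fW_lip) (by simp [fW]) (by simp [fW])
    | tB h =>
      refine le_trans ?_ (le_iSup _ RVertex.w2)
      exact edist_ge_of_potential fW (lip_of_rel _ fW_lip) (by simp [fW]) (by simp [fW])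
    | cA =>
      refine le_trans ?_ (le_iSup _ RVertex.w2)
      exact edist_ge_of_potential fW (lip_of_rel _ fW_lip) (by simp [fW]) (by simp [fW])
    | cA' =>
      refine le_trans ?_ (le_iSup _ RVertex.w2)
      exact edist_ge_of_potential fW (lip_of_rel _ fW_lip) (by simp [fW]) (by simp [fW])
    | cB =>
      refine le_trans ?_ (le_iSup _ RVertex.w2)
      exact edist_ge_of_potential fW (lip_of_rel _ fW_lip) (by simp [fW]) (by simp [fW])
    | cB' =>
      refine le_trans ?_ (le_iSup _ RVertex.w2)
      exact edist_ge_of_potential fW (lip_of_rel _ fW_lip) (by simp [fW]) (by simp [fW])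
    | w0 =>
      refine le_trans ?_ (le_iSup _ (RVertex.b ⟨0, by omega⟩))
      exact edist_ge_of_potential gB (lip_of_rel _ gB_lip) (by simp [gB]) (by simp [gB])
    | w1 =>
      refine le_trans ?_ (le_iSup _ (RVertex.b ⟨0, by omega⟩))
      exact edist_ge_of_potential gB (lip_of_rel _ gB_lip) (by simp [gB]) (by simp [gB])
    | w2 =>
      refine le_trans ?_ (le_iSup _ (RVertex.b ⟨0, by omega⟩))
      exact edist_ge_of_potential gB (lip_of_rel _ gB_lip) (by simp [gB]) (by simp [gB])
  · intro hrad
    rintro ⟨i, hxi, hyi⟩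
    have hupper : eccent (rGraph k logk x y) (RVertex.a i) ≤ 3 := by
      rw [eccent]
      refine iSup_le fun v => ?_
      cases v with
      | a j =>
        by_cases hj : j = i
        · subst hj; simp
        · refine le_trans (chain2 (p := RVertex.cA)
            (rAdj (by simp) (Or.inl (by simp [rRel])))
            (rAdj (by simp) (Or.inr (by simp [rRel])))) (by norm_num)
      | b j =>
        by_cases hj : j = i
        · subst hj
          exact chain3 (p := RVertex.cA') (q := RVertex.cB')
            (rAdj (by simp) (Or.inl (by simp [rRel, hxi])))
            (rAdj (by simp) (Or.inl (by simp [rRel])))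
            (rAdj (by simp) (Or.inr (by simp [rRel, hyi])))
        · obtain ⟨h, hbit⟩ := exists_diff_bit hpow (fun hc : i = j => hj hc.symm)
          cases hib : i.val.testBit h.val with
          | false =>
            have hjb : j.val.testBit h.val = true := by
              cases hjb : j.val.testBit h.val
              · exact absurd (hib.trans hjb.symm) hbit
              · rfl
            exact chain3 (p := RVertex.fA h) (q := RVertex.tB h)
              (rAdj (by simp) (Or.inl (by simp [rRel, hib])))
              (rAdj (by simp) (Or.inl (by simp [rRel])))
              (rAdj (by simp) (Or.inr (by simp [rRel, hjb])))
          | true =>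
            have hjb : j.val.testBit h.val = false := by
              cases hjb : j.val.testBit h.val
              · rfl
              · exact absurd (hib.trans hjb.symm) hbit
            exact chain3 (p := RVertex.tA h) (q := RVertex.fB h)
              (rAdj (by simp) (Or.inl (by simp [rRel, hib])))
              (rAdj (by simp) (Or.inl (by simp [rRel])))
              (rAdj (by simp) (Or.inr (by simp [rRel, hjb])))
      | fA h =>
        refine le_trans (chain2 (p := RVertex.cA')
          (rAdj (by simp) (Or.inl (by simp [rRel, hxi])))
          (rAdj (by simp) (Or.inr (by simp [rRel])))) (by norm_num)
      | tA h =>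
        refine le_trans (chain2 (p := RVertex.cA')
          (rAdj (by simp) (Or.inl (by simp [rRel, hxi])))
          (rAdj (by simp) (Or.inr (by simp [rRel])))) (by norm_num)
      | fB h =>
        exact chain3 (p := RVertex.cA') (q := RVertex.cB')
          (rAdj (by simp) (Or.inl (by simp [rRel, hxi])))
          (rAdj (by simp) (Or.inl (by simp [rRel])))
          (rAdj (by simp) (Or.inr (by simp [rRel])))
      | tB h =>
        exact chain3 (p := RVertex.cA') (q := RVertex.cB')
          (rAdj (by simp) (Or.inl (by simp [rRel, hxi])))
          (rAdj (by simp) (Or.inl (by simp [rRel])))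
          (rAdj (by simp) (Or.inr (by simp [rRel])))
      | cA =>
        exact le_trans (edist_le_one (rAdj (by simp) (Or.inl (by simp [rRel])))) (by norm_num)
      | cA' =>
        exact le_trans (edist_le_one (rAdj (by simp) (Or.inl (by simp [rRel, hxi])))) (by norm_num)
      | cB =>
        exact chain3 (p := RVertex.cA') (q := RVertex.cB')
          (rAdj (by simp) (Or.inl (by simp [rRel, hxi])))
          (rAdj (by simp) (Or.inl (by simp [rRel])))
          (rAdj (by simp) (Or.inr (by simp [rRel])))
      | cB' =>
        refine le_trans (chain2 (p := RVertex.cA')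
          (rAdj (by simp) (Or.inl (by simp [rRel, hxi])))
          (rAdj (by simp) (Or.inl (by simp [rRel])))) (by norm_num)
      | w0 =>
        exact le_trans (edist_le_one (rAdj (by simp) (Or.inr (by simp [rRel])))) (by norm_num)
      | w1 =>
        refine le_trans (chain2 (p := RVertex.w0)
          (rAdj (by simp) (Or.inr (by simp [rRel])))
          (rAdj (by simp) (Or.inl (by simp [rRel])))) (by norm_num)
      | w2 =>
        exact chain3 (p := RVertex.w0) (q := RVertex.w1)
          (rAdj (by simp) (Or.inr (by simp [rRel])))
          (rAdj (by simp) (Or.inl (by simp [rRel])))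
          (rAdj (by simp) (Or.inl (by simp [rRel])))
    have h1 : radius (rGraph k logk x y) ≤ 3 := le_trans (iInf_le _ _) hupper
    have h2 : (4 : ℕ∞) ≤ 3 := le_trans hrad h1
    norm_num at h2
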